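/- arXiv:2012.01656 — 5 statements merged into one kernel-verified Lean document; each statement's English description precedes it below -/
import Mathlib

section
/- The category of directed multigraphs — the functor category from the walking parallel pair to the category of types (equivalently, presheaves on the category with two objects and a parallel pair of arrows between them) — is adhesive: it has pullbacks, pushouts along monomorphisms exist, and every pushout along a monomorphism is a van Kampen square. -/
open CategoryTheory CategoryTheory.Limits

/-! Colimits and limits in a functor category are computed pointwise, so adhesivity of `Type`
(`Type.adhesive`) transfers to `WalkingParallelPair ⥤ Type` (`adhesive_functor`). -/

/-- The category of directed multigraphs, presented as the functor category from the
walking parallel pair to `Type`, is adhesive: it has pullbacks, pushouts along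
monomorphisms exist, and every pushout along a monomorphism is a van Kampen square. -/
theorem graphs_adhesive :
    HasPullbacks (WalkingParallelPair ⥤ Type) ∧
    (∀ {S X Y : WalkingParallelPair ⥤ Type} (f : S ⟶ X) (g : S ⟶ Y),
      Mono f → HasPushout f g) ∧
    (∀ {W X Y Z : WalkingParallelPair ⥤ Type} (f : W ⟶ X) (g : W ⟶ Y)
      (h : X ⟶ Z) (i : Y ⟶ Z), Mono f → ∀ (H : IsPushout f g h i), H.IsVanKampen) ∧
    Adhesive (WalkingParallelPair ⥤ Type) :=
  ⟨inferInstance, fun _ _ _ => inferInstance, fun _ _ _ _ _ H => Adhesive.van_kampen H,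
    inferInstance⟩
end

section
/- If C is an adhesive category and X is an object of C, then the over (slice) category C/X is adhesive. In particular, for a fixed type graph TG, the category of TG-typed graphs, being the slice of the category of directed multigraphs over TG, is adhesive. -/
/-!
The forgetful functor `Over B ⥤ C` creates colimits and connected limits, so pullbacks and
pushouts in `Over B` are exactly the squares that are pullbacks and pushouts in `C`, and monos
in `Over B` are monos in `C`. A van Kampen cube over a pushout along a mono in `Over B` is
therefore a van Kampen cube in `C`, and the adhesivity of `C` applies to it. The pushouts of the
primed face exist in `C` because its left leg, a pullback of a mono, is again a mono.
-/

open CategoryTheory CategoryTheory.Limits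

namespace CategoryTheory.Over

variable {C : Type*} [Category* C] {B : C}

theorem hasPullback_of_hasPullback_left {X Y S : Over B} (f : X ⟶ S) (g : Y ⟶ S)
    [h : HasPullback f.left g.left] : HasPullback f g :=
  have : HasPullback ((forget B).map f) ((forget B).map g) := h
  have : HasLimit (cospan f g ⋙ forget B) :=
    hasLimit_of_iso (cospanCompIso (forget B) f g).symm
  hasLimit_of_created (cospan f g) (forget B)

theorem hasColimit_span_comp_forget {X Y S : Over B} (f : S ⟶ X) (g : S ⟶ Y)
    [h : HasPushout f.left g.left] : HasColimit (span f g ⋙ forget B) :=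
  have : HasPushout ((forget B).map f) ((forget B).map g) := h
  hasColimit_of_iso (spanCompIso (forget B) f g)

theorem hasPushout_of_hasPushout_left {X Y S : Over B} (f : S ⟶ X) (g : S ⟶ Y)
    [HasPushout f.left g.left] : HasPushout f g :=
  have := hasColimit_span_comp_forget f g
  hasColimit_of_created (span f g) (forget B)

theorem isPullback_iff_isPullback_left {P X Y Z : Over B} {fst : P ⟶ X} {snd : P ⟶ Y}
    {f : X ⟶ Z} {g : Y ⟶ Z} (w : fst ≫ f = snd ≫ g) :
    IsPullback fst snd f g ↔ IsPullback fst.left snd.left f.left g.left :=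
  (IsPullback.map_iff (forget B) w).symm

theorem isPushout_iff_isPushout_left {W X Y Z : Over B} {f : W ⟶ X} {g : W ⟶ Y}
    {h : X ⟶ Z} {i : Y ⟶ Z} (w : f ≫ h = g ≫ i) [HasPushout f.left g.left] :
    IsPushout f g h i ↔ IsPushout f.left g.left h.left i.left :=
  have := hasColimit_span_comp_forget f g
  (IsPushout.map_iff (forget B) w).symm

theorem isVanKampen_of_mono [Adhesive C] {W X Y Z : Over B} {f : W ⟶ X} {g : W ⟶ Y}
    {h : X ⟶ Z} {i : Y ⟶ Z} [Mono f] (H : IsPushout f g h i) : H.IsVanKampen := by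
  have hvk := Adhesive.van_kampen ((isPushout_iff_isPushout_left H.w).mp H)
  intro W' X' Y' Z' f' g' h' i' αW αX αY αZ hf hg hh hi w
  have hf' := (isPullback_iff_isPullback_left hf.w).mp hf
  have : Mono f'.left := hf'.mono_fst_of_mono
  rw [isPushout_iff_isPushout_left w.w, isPullback_iff_isPullback_left hh.w,
    isPullback_iff_isPullback_left hi.w]
  exact hvk _ _ _ _ _ _ _ _ hf' ((isPullback_iff_isPullback_left hg.w).mp hg)
    (hh.map (forget B)) (hi.map (forget B)) (w.map (forget B))

instance adhesive [Adhesive C] (B : C) : Adhesive (Over B) where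
  hasPullback_of_mono_left f g := hasPullback_of_hasPullback_left f g
  hasPushout_of_mono_left f g := hasPushout_of_hasPushout_left f g
  van_kampen := isVanKampen_of_mono

end CategoryTheory.Over

/-- If `C` is an adhesive category and `X : C`, then the over (slice) category `Over X`
is adhesive.  In particular, for a fixed type graph `TG` (an object of the category of
directed multigraphs, i.e. of the functor category from the walking parallel pair to
`Type`), the category of `TG`-typed graphs, being the slice over `TG`, is adhesive. -/
theorem slice_adhesive {C : Type u} [Category.{v} C] [Adhesive C] (X : C)
    (TG : WalkingParallelPair ⥤ Type) :
    Adhesive (Over X) ∧ Adhesive (Over TG) :=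
  ⟨inferInstance, inferInstance⟩
end

section
/- Shift lemma: let b : P → R be an injective morphism of finite directed multigraphs and let d be a condition over P. Then there exists a condition d' over R (the shift of d along b, constructed as a finite disjunction over jointly surjective pairs of injective morphisms completing commuting squares over b and the morphisms of d) such that for every directed multigraph H and every injective morphism n : R → H: n ∘ b satisfies d if and only if n satisfies d'. -/
/-!
Shifting commutes with negation and conjunction, so only `∃(a, c)` needs work. A witness
`q : C → H` of `∃(a, c)` at `n ∘ b` determines the partial injection `C ⇀ R` matching the
points that `q` and `n` hit in common; gluing `R` and `C` along it gives a finite graph through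
whose two inclusions `n` and `q` factor by one injective morphism. There are only finitely
many such partial injections, so `∃(a, c)` at `n ∘ b` becomes a finite disjunction of
existentials at `n`, and induction on `c` shifts the nested condition along the inclusion of `C`.
-/

/-- A directed multigraph: a set of nodes, a set of edges, and source/target maps. -/
structure MGraph : Type 1 where
  V : Type
  E : Type
  s : E → V
  t : E → V

/-- A morphism of directed multigraphs: maps on nodes and edges compatible with
sources and targets. -/
structure GraphHom (G H : MGraph) : Type where
  fV : G.V → H.V
  fE : G.E → H.E
  src : ∀ e, H.s (fE e) = fV (G.s e)
  tgt : ∀ e, H.t (fE e) = fV (G.t e)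

/-- Composition of graph morphisms. -/
def GraphHom.comp {G H K : MGraph} (g : GraphHom H K) (f : GraphHom G H) :
    GraphHom G K where
  fV := g.fV ∘ f.fV
  fE := g.fE ∘ f.fE
  src e := by simp [g.src, f.src]
  tgt e := by simp [g.tgt, f.tgt]

/-- A graph morphism is injective if it is injective on nodes and on edges. -/
def GraphHom.Injective {G H : MGraph} (f : GraphHom G H) : Prop :=
  Function.Injective f.fV ∧ Function.Injective f.fE

/-- A graph is finite if its node set and edge set are finite. -/
def MGraph.Finite (G : MGraph) : Prop :=
  _root_.Finite G.V ∧ _root_.Finite G.E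

/-- Nested graph conditions over a graph `A`: `true`, existential conditions
`∃(a, c)` along an injective morphism `a : A → C` into a finite graph `C`,
negation, and (binary) conjunction. -/
inductive Cond : MGraph → Type 1 where
  | tru (A : MGraph) : Cond A
  | ex {A C : MGraph} (a : GraphHom A C) (hC : C.Finite) (ha : a.Injective)
      (c : Cond C) : Cond A
  | not {A : MGraph} (c : Cond A) : Cond A
  | and {A : MGraph} (c₁ c₂ : Cond A) : Cond A

/-- Satisfaction of a condition over `A` by a morphism `A → G`. -/
def Sat {G : MGraph} : {A : MGraph} → GraphHom A G → Cond A → Prop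
  | _, _, Cond.tru _ => True
  | _, p, Cond.ex a _ _ c => ∃ q, GraphHom.Injective q ∧ q.comp a = p ∧ Sat q c
  | _, p, Cond.not c => ¬ Sat p c
  | _, p, Cond.and c₁ c₂ => Sat p c₁ ∧ Sat p c₂

@[ext]
theorem GraphHom.ext {G H : MGraph} {f g : GraphHom G H}
    (hV : f.fV = g.fV) (hE : f.fE = g.fE) : f = g := by
  cases f; cases g; congr

theorem GraphHom.comp_assoc {G H K L : MGraph} (h : GraphHom K L)
    (g : GraphHom H K) (f : GraphHom G H) :
    (h.comp g).comp f = h.comp (g.comp f) :=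
  rfl

theorem GraphHom.Injective.comp {G H K : MGraph} {g : GraphHom H K}
    {f : GraphHom G H} (hg : g.Injective) (hf : f.Injective) :
    (g.comp f).Injective :=
  ⟨hg.1.comp hf.1, hg.2.comp hf.2⟩

namespace Cond

def ff (A : MGraph) : Cond A := not (tru A)

def or {A : MGraph} (c₁ c₂ : Cond A) : Cond A := not (and (not c₁) (not c₂))

def disj {A : MGraph} : List (Cond A) → Cond A
  | [] => ff A
  | c :: l => or c (disj l)

noncomputable def iDisj {A : MGraph} {ι : Type*} [Finite ι] (c : ι → Cond A) : Cond A :=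
  disj ((@Finset.univ ι (Fintype.ofFinite ι)).toList.map c)

variable {G A : MGraph} (p : GraphHom A G)

theorem sat_or (c₁ c₂ : Cond A) : Sat p (or c₁ c₂) ↔ Sat p c₁ ∨ Sat p c₂ := by
  simp only [or, Sat]
  tauto

theorem sat_disj (l : List (Cond A)) : Sat p (disj l) ↔ ∃ c ∈ l, Sat p c := by
  induction l with
  | nil => simp [disj, ff, Sat]
  | cons c l ih => simp [disj, sat_or, ih]

theorem sat_iDisj {ι : Type*} [Finite ι] (c : ι → Cond A) :
    Sat p (iDisj c) ↔ ∃ i, Sat p (c i) := by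
  simp [iDisj, sat_disj]

end Cond

section SumCompl

variable {α β : Type*} (g : α → Option β)

def toSumCompl (x : α) : β ⊕ {x // g x = none} :=
  match h : g x with
  | some r => Sum.inl r
  | none => Sum.inr ⟨x, h⟩

variable {g}

theorem toSumCompl_of_eq_some {x : α} {r : β} (h : g x = some r) :
    toSumCompl g x = Sum.inl r := by
  unfold toSumCompl; split <;> simp_all

theorem toSumCompl_of_eq_none {x : α} (h : g x = none) :
    toSumCompl g x = Sum.inr ⟨x, h⟩ := by
  unfold toSumCompl; split <;> simp_all

theorem toSumCompl_injective (hg : ∀ x y r, g x = some r → g y = some r → x = y) :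
    Function.Injective (toSumCompl g) := by
  intro x y hxy
  rcases hx : g x with _ | r <;> rcases hy : g y with _ | r'
  · rw [toSumCompl_of_eq_none hx, toSumCompl_of_eq_none hy] at hxy
    simpa using hxy
  · rw [toSumCompl_of_eq_none hx, toSumCompl_of_eq_some hy] at hxy; cases hxy
  · rw [toSumCompl_of_eq_some hx, toSumCompl_of_eq_none hy] at hxy; cases hxy
  · rw [toSumCompl_of_eq_some hx, toSumCompl_of_eq_some hy, Sum.inl.injEq] at hxy
    exact hg x y r hx (hxy ▸ hy)

theorem elim_toSumCompl {γ : Type*} {u : β → γ} {w : α → γ}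
    (h : ∀ x r, g x = some r → u r = w x) (x : α) :
    Sum.elim u (fun y => w y.1) (toSumCompl g x) = w x := by
  rcases hx : g x with _ | r
  · rw [toSumCompl_of_eq_none hx]; rfl
  · rw [toSumCompl_of_eq_some hx]; exact h x r hx

end SumCompl

/-- An overlap of `R` and `C` over `P` is a partial injective graph morphism `C ⇀ R` that
contains `b ∘ a⁻¹`. Up to isomorphism, overlaps are the jointly surjective pairs of injective
morphisms `R → E ← C` commuting over `b` and `a`; `E` is rebuilt as `glue`. -/
@[ext]
structure Overlap {P R C : MGraph} (b : GraphHom P R) (a : GraphHom P C) : Type where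
  onV : C.V → Option R.V
  onE : C.E → Option R.E
  onV_inj : ∀ x y r, onV x = some r → onV y = some r → x = y
  onE_inj : ∀ x y r, onE x = some r → onE y = some r → x = y
  onV_src : ∀ f e, onE f = some e → onV (C.s f) = some (R.s e)
  onV_tgt : ∀ f e, onE f = some e → onV (C.t f) = some (R.t e)
  onV_comp : ∀ p, onV (a.fV p) = some (b.fV p)
  onE_comp : ∀ p, onE (a.fE p) = some (b.fE p)

namespace Overlap

variable {P R C H : MGraph} {b : GraphHom P R} {a : GraphHom P C}

theorem finite (hR : R.Finite) (hC : C.Finite) : Finite (Overlap b a) := by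
  have := hR.1; have := hR.2; have := hC.1; have := hC.2
  exact Finite.of_injective (fun m : Overlap b a => (m.onV, m.onE))
    fun m₁ m₂ h => Overlap.ext (congrArg Prod.fst h) (congrArg Prod.snd h)

variable (m : Overlap b a)

def glue : MGraph where
  V := R.V ⊕ {x // m.onV x = none}
  E := R.E ⊕ {f // m.onE f = none}
  s := Sum.elim (Sum.inl ∘ R.s) (fun f => toSumCompl m.onV (C.s f.1))
  t := Sum.elim (Sum.inl ∘ R.t) (fun f => toSumCompl m.onV (C.t f.1))

theorem glue_finite (hR : R.Finite) (hC : C.Finite) : m.glue.Finite := by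
  have := hR.1; have := hR.2; have := hC.1; have := hC.2
  exact ⟨inferInstanceAs (Finite (_ ⊕ _)), inferInstanceAs (Finite (_ ⊕ _))⟩

def inR : GraphHom R m.glue where
  fV := Sum.inl
  fE := Sum.inl
  src _ := rfl
  tgt _ := rfl

theorem inR_injective : m.inR.Injective :=
  ⟨Sum.inl_injective, Sum.inl_injective⟩

def inC : GraphHom C m.glue where
  fV := toSumCompl m.onV
  fE := toSumCompl m.onE
  src f := by
    rcases h : m.onE f with _ | e
    · rw [toSumCompl_of_eq_none h]; rfl
    · rw [toSumCompl_of_eq_some h, toSumCompl_of_eq_some (m.onV_src f e h)]; rfl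
  tgt f := by
    rcases h : m.onE f with _ | e
    · rw [toSumCompl_of_eq_none h]; rfl
    · rw [toSumCompl_of_eq_some h, toSumCompl_of_eq_some (m.onV_tgt f e h)]; rfl

theorem inC_injective : m.inC.Injective :=
  ⟨toSumCompl_injective m.onV_inj, toSumCompl_injective m.onE_inj⟩

theorem inC_comp : m.inC.comp a = m.inR.comp b := by
  ext p
  · exact toSumCompl_of_eq_some (m.onV_comp p)
  · exact toSumCompl_of_eq_some (m.onE_comp p)

/-- The glued graph is the pushout of `R ← dom m → C`; this is its copairing. -/
def lift (n : GraphHom R H) (q : GraphHom C H)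
    (hV : ∀ x r, m.onV x = some r → n.fV r = q.fV x) : GraphHom m.glue H where
  fV := Sum.elim n.fV (fun x => q.fV x.1)
  fE := Sum.elim n.fE (fun f => q.fE f.1)
  src := by
    rintro (e | f)
    · exact n.src e
    · exact (q.src f.1).trans (elim_toSumCompl hV _).symm
  tgt := by
    rintro (e | f)
    · exact n.tgt e
    · exact (q.tgt f.1).trans (elim_toSumCompl hV _).symm

variable {m} {n : GraphHom R H} {q : GraphHom C H}
  {hV : ∀ x r, m.onV x = some r → n.fV r = q.fV x}

theorem lift_comp_inR : (m.lift n q hV).comp m.inR = n :=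
  rfl

theorem lift_comp_inC (hE : ∀ f e, m.onE f = some e → n.fE e = q.fE f) :
    (m.lift n q hV).comp m.inC = q := by
  ext x
  · exact elim_toSumCompl hV x
  · exact elim_toSumCompl hE x

theorem lift_injective (hn : n.Injective) (hq : q.Injective)
    (hV' : ∀ x r, m.onV x = none → n.fV r ≠ q.fV x)
    (hE' : ∀ f e, m.onE f = none → n.fE e ≠ q.fE f) : (m.lift n q hV).Injective :=
  ⟨hn.1.sumElim (hq.1.comp Subtype.val_injective) fun r x => hV' x.1 r x.2,
    hn.2.sumElim (hq.2.comp Subtype.val_injective) fun e f => hE' f.1 e f.2⟩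

noncomputable def ofSquare (hn : n.Injective) (hq : q.Injective) (h : q.comp a = n.comp b) :
    Overlap b a where
  onV x := Function.partialInv n.fV (q.fV x)
  onE f := Function.partialInv n.fE (q.fE f)
  onV_inj _ _ r hx hy :=
    hq.1 (((hn.1.isPartialInv r _).1 hx).symm.trans ((hn.1.isPartialInv r _).1 hy))
  onE_inj _ _ r hx hy :=
    hq.2 (((hn.2.isPartialInv r _).1 hx).symm.trans ((hn.2.isPartialInv r _).1 hy))
  onV_src f e he := (hn.1.isPartialInv _ _).2 <|
    (n.src e).symm.trans ((congrArg H.s ((hn.2.isPartialInv e _).1 he)).trans (q.src f))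
  onV_tgt f e he := (hn.1.isPartialInv _ _).2 <|
    (n.tgt e).symm.trans ((congrArg H.t ((hn.2.isPartialInv e _).1 he)).trans (q.tgt f))
  onV_comp p := (hn.1.isPartialInv _ _).2 (congrFun (congrArg GraphHom.fV h) p).symm
  onE_comp p := (hn.2.isPartialInv _ _).2 (congrFun (congrArg GraphHom.fE h) p).symm

theorem exists_injective_lift (hn : n.Injective) (hq : q.Injective) (h : q.comp a = n.comp b) :
    ∃ (m : Overlap b a) (q' : GraphHom m.glue H),
      q'.Injective ∧ q'.comp m.inR = n ∧ q'.comp m.inC = q := by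
  have hV x r (hx : (ofSquare hn hq h).onV x = some r) : n.fV r = q.fV x :=
    (hn.1.isPartialInv r _).1 hx
  have hE f e (hf : (ofSquare hn hq h).onE f = some e) : n.fE e = q.fE f :=
    (hn.2.isPartialInv e _).1 hf
  have hV' x r (hx : (ofSquare hn hq h).onV x = none) : n.fV r ≠ q.fV x := fun hr => by
    simp [ofSquare, (hn.1.isPartialInv r _).2 hr] at hx
  have hE' f e (hf : (ofSquare hn hq h).onE f = none) : n.fE e ≠ q.fE f := fun he => by
    simp [ofSquare, (hn.2.isPartialInv e _).2 he] at hf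
  exact ⟨_, lift _ n q hV, lift_injective hn hq hV' hE', lift_comp_inR, lift_comp_inC hE⟩

end Overlap

namespace Cond

noncomputable def shift : {P : MGraph} → Cond P → {R : MGraph} → R.Finite → GraphHom P R →
    Cond R
  | _, tru _, R, _, _ => tru R
  | _, ex a hC _ c, _, hR, b =>
    have := Overlap.finite (b := b) (a := a) hR hC
    iDisj fun m : Overlap b a =>
      ex m.inR (m.glue_finite hR hC) m.inR_injective (c.shift (m.glue_finite hR hC) m.inC)
  | _, not c, _, hR, b => not (c.shift hR b)
  | _, and c₁ c₂, _, hR, b => and (c₁.shift hR b) (c₂.shift hR b)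

theorem sat_shift {P : MGraph} (d : Cond P) {R : MGraph} (hR : R.Finite) (b : GraphHom P R)
    {H : MGraph} {n : GraphHom R H} (hn : n.Injective) :
    Sat (n.comp b) d ↔ Sat n (d.shift hR b) := by
  induction d generalizing R H with
  | tru => simp only [Sat, shift]
  | not c ih => simp only [Sat, shift, ih hR b hn]
  | and c₁ c₂ ih₁ ih₂ => simp only [Sat, shift, ih₁ hR b hn, ih₂ hR b hn]
  | ex a hC _ c ih =>
    simp only [Sat, shift, sat_iDisj]
    constructor
    · rintro ⟨q, hq, hsquare, hc⟩
      obtain ⟨m, q', hq', hq'R, hq'C⟩ := Overlap.exists_injective_lift hn hq hsquare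
      exact ⟨m, q', hq', hq'R, (ih _ m.inC hq').1 (hq'C ▸ hc)⟩
    · rintro ⟨m, q', hq', rfl, hc⟩
      refine ⟨q'.comp m.inC, hq'.comp m.inC_injective, ?_, (ih _ m.inC hq').2 hc⟩
      rw [GraphHom.comp_assoc, m.inC_comp, GraphHom.comp_assoc]

end Cond

theorem shift_lemma_general {P R : MGraph} (hR : R.Finite)
    (b : GraphHom P R) (d : Cond P) :
    ∃ d' : Cond R, ∀ (H : MGraph) (n : GraphHom R H), n.Injective →
      (Sat (n.comp b) d ↔ Sat n d') :=
  ⟨d.shift hR b, fun _ _ hn => d.sat_shift hR b hn⟩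

/-- Shift lemma: a condition `d` over `P` can be shifted along an injective morphism
`b : P → R` of finite graphs to a condition `d'` over `R` such that for all graphs `H`
and injective `n : R → H`, `n ∘ b ⊨ d` iff `n ⊨ d'`. -/
theorem shift_lemma {P R : MGraph} (hP : P.Finite) (hR : R.Finite)
    (b : GraphHom P R) (hb : b.Injective) (d : Cond P) :
    ∃ d' : Cond R, ∀ (H : MGraph) (n : GraphHom R H), n.Injective →
      (Sat (n.comp b) d ↔ Sat n d') :=
  shift_lemma_general hR b d
end

section
/- Preserving repair (sequential composition): let X be a type, n ≥ 1, let d_1, …, d_n be predicates on X and P_1, …, P_n binary relations on X. Assume each P_i is a repair relation for d_i, and assume the sequence is preserving: for every k with 2 ≤ k ≤ n, whenever P_k G H and d_i G holds for all i < k, then d_i H holds for all i < k. Then the sequential composition P_1 ; … ; P_n is a repair relation for the conjunction d_1 ∧ … ∧ d_n: it is total, and whenever (P_1 ; … ; P_n) G H, all of d_1 H, …, d_n H hold. -/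
/-- Sequential (relational) composition of a list of binary relations:
`SeqComp [] G H` iff `G = H`, and `SeqComp (P :: Ps) G H` iff there is `M` with
`P G M` and `SeqComp Ps M H`. -/
def SeqComp {X : Type u} : List (X → X → Prop) → (X → X → Prop)
  | [] => fun G H => G = H
  | P :: Ps => fun G H => ∃ M, P G M ∧ SeqComp Ps M H

/-!
Run the composition left to right with the invariant "`d i` holds for every `i < k`" after the
first `k` steps: step `k` keeps the earlier `d i` by preservation and establishes `d k` by
correctness.
-/

namespace SeqComp

variable {X : Type u}

theorem exists_of_forall_mem {L : List (X → X → Prop)} (hL : ∀ P ∈ L, ∀ G, ∃ H, P G H)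
    (G : X) : ∃ H, SeqComp L G H := by
  induction L generalizing G with
  | nil => exact ⟨G, rfl⟩
  | cons P Ps ih =>
    obtain ⟨M, hGM⟩ := hL P List.mem_cons_self G
    obtain ⟨H, hMH⟩ := ih (fun Q hQ => hL Q (List.mem_cons_of_mem P hQ)) M
    exact ⟨H, M, hGM, hMH⟩

theorem ofFn_invariant {n : ℕ} (P : Fin n → X → X → Prop) (Q : ℕ → X → Prop)
    (hstep : ∀ (k : Fin n) G H, P k G H → Q k G → Q (k + 1) H) {G H : X}
    (hGH : SeqComp (List.ofFn P) G H) (hG : Q 0 G) : Q n H := by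
  induction n generalizing G Q with
  | zero => exact hGH ▸ hG
  | succ n ih =>
    rw [List.ofFn_succ] at hGH
    obtain ⟨M, hGM, hMH⟩ := hGH
    exact ih (fun k => P k.succ) (fun j => Q (j + 1)) (fun k => hstep k.succ) hMH
      (hstep 0 G M hGM hG)

end SeqComp

theorem preserving_repair_general {X : Type u} {n : ℕ}
    (d : Fin n → X → Prop) (P : Fin n → X → X → Prop)
    (htotal : ∀ i, ∀ G, ∃ H, P i G H)
    (hcorrect : ∀ i, ∀ G H, P i G H → d i H)
    (hpres : ∀ k : Fin n, ∀ G H, P k G H →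
      (∀ i : Fin n, i < k → d i G) → ∀ i : Fin n, i < k → d i H) :
    (∀ G, ∃ H, SeqComp (List.ofFn P) G H) ∧
    (∀ G H, SeqComp (List.ofFn P) G H → ∀ i, d i H) := by
  refine ⟨SeqComp.exists_of_forall_mem (List.forall_mem_ofFn_iff.mpr htotal), ?_⟩
  intro G H hGH i
  have hprefix : ∀ i : Fin n, (i : ℕ) < n → d i H := by
    refine SeqComp.ofFn_invariant P (fun j M => ∀ i : Fin n, (i : ℕ) < j → d i M) ?_ hGH
      (fun i hi => absurd hi (Nat.not_lt_zero i))
    intro k G' H' hP hG' i hi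
    rcases Nat.lt_succ_iff_lt_or_eq.mp hi with hlt | heq
    · exact hpres k G' H' hP hG' i hlt
    · exact Fin.ext heq ▸ hcorrect k G' H' hP
  exact hprefix i i.isLt

/-- Preserving repair: if each `P i` is a repair relation for `d i` (total and
correct), and the sequence is preserving (each `P k` preserves all preceding
conditions `d i`, `i < k`), then the sequential composition `P 0 ; … ; P (n-1)` is a
repair relation for the conjunction of the `d i`: it is total, and every result
satisfies all of the `d i`. -/
theorem preserving_repair {X : Type u} {n : ℕ} (hn : 1 ≤ n)
    (d : Fin n → X → Prop) (P : Fin n → X → X → Prop)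
    (htotal : ∀ i, ∀ G, ∃ H, P i G H)
    (hcorrect : ∀ i, ∀ G H, P i G H → d i H)
    (hpres : ∀ k : Fin n, ∀ G H, P k G H →
      (∀ i : Fin n, i < k → d i G) → ∀ i : Fin n, i < k → d i H) :
    (∀ G, ∃ H, SeqComp (List.ofFn P) G H) ∧
    (∀ G H, SeqComp (List.ofFn P) G H → ∀ i, d i H) :=
  preserving_repair_general d P htotal hcorrect hpres
end

section
/- Composition of repair relations: let X be a type, e₁, e₂ predicates on X and Q₁, Q₂ binary relations on X. If Q₁ is a repair relation for e₁ and Q₂ is an e₁-preserving repair relation for e₂, then the sequential composition Q₁ ; Q₂ is a repair relation for the conjunction e₁ ∧ e₂. -/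
theorem Relator.LeftTotal.relationComp {α β γ : Type*} {r : α → β → Prop} {p : β → γ → Prop}
    (hr : LeftTotal r) (hp : LeftTotal p) : LeftTotal (Relation.Comp r p) :=
  LeftTotal.trans (fun _ b _ hab hbc ↦ ⟨b, hab, hbc⟩) hr hp

theorem Relation.Comp.and_of_preserving {α β : Type*} {r : α → β → Prop} {p : β → β → Prop}
    {d e : β → Prop} (hr : ∀ a b, r a b → d b) (hp : ∀ b c, p b c → e c)
    (hpd : ∀ b c, p b c → d b → d c) {a : α} {c : β} (h : Relation.Comp r p a c) :
    d c ∧ e c :=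
  let ⟨b, hab, hbc⟩ := h
  ⟨hpd b c hbc (hr a b hab), hp b c hbc⟩

/-- Composition of repair relations: if `Q₁` is a repair relation for `e₁` (total and
correct) and `Q₂` is an `e₁`-preserving repair relation for `e₂`, then the sequential
composition `Q₁ ; Q₂` is a repair relation for the conjunction `e₁ ∧ e₂`. -/
theorem repair_composition {X : Type u} (e₁ e₂ : X → Prop) (Q₁ Q₂ : X → X → Prop)
    (h₁total : ∀ G, ∃ H, Q₁ G H) (h₁correct : ∀ G H, Q₁ G H → e₁ H)
    (h₂total : ∀ G, ∃ H, Q₂ G H) (h₂correct : ∀ G H, Q₂ G H → e₂ H)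
    (h₂pres : ∀ G H, Q₂ G H → e₁ G → e₁ H) :
    (∀ G, ∃ H, ∃ M, Q₁ G M ∧ Q₂ M H) ∧
    (∀ G H, (∃ M, Q₁ G M ∧ Q₂ M H) → e₁ H ∧ e₂ H) :=
  ⟨Relator.LeftTotal.relationComp h₁total h₂total,
    fun _ _ h ↦ Relation.Comp.and_of_preserving h₁correct h₂correct h₂pres h⟩
end
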